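/- For all integers n ≥ 0 and k ≥ 0, b_{2k+1}(8n+7) ≡ 0 (mod 16), where b_m denotes the overcubic partition m-tuples function. -/

import Mathlib

/-!
Gauss's identity `f₁² = f₂ φ(-q)`, used at `q` and at `q²`, turns the generating function
`f₄ᵐ / (f₁^{2m} f₂ᵐ)` into `(φ(-q) φ(-q²))^{-m}`. Both theta series have the form `1 + 2 (…)`, so
`(φ(-q) φ(-q²))⁸ ≡ 1 (mod 16)` and the generating function is congruent to `(1 + 2S)^{7m}`, where
`S = A + B + 2AB` with `A` supported on squares and `B` on doubled squares. Modulo 16 only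
`(2S)^a` with `a ≤ 3` survive in the binomial expansion. Squares are `0, 1, 4` and doubled squares
`0, 2` modulo 8, so none of the products that occur reaches an exponent `≡ 7 (mod 8)`, except
`A²B`, whose coefficients are even because `A² ≡ B (mod 2)`.

Gauss's identity is derived, modulo `q^{D+1}`, from a finite Jacobi triple product with Gaussian
binomial coefficients.
-/

open PowerSeries

/-- Truncated version of `fₖ = ∏_{i≥1} (1 - q^{k i})`: the product over `1 ≤ i ≤ N`,
which has the same coefficients as the infinite product in degrees `≤ N`. -/
noncomputable def fTrunc (k N : ℕ) : PowerSeries ℤ :=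
  ∏ i ∈ Finset.Icc 1 N, (1 - (PowerSeries.X : PowerSeries ℤ) ^ (k * i))

/-- `b m n` is the `n`-th coefficient of `f₄ᵐ / (f₁^{2m} f₂ᵐ)`, the number of
overcubic partition `m`-tuples of `n`. -/
noncomputable def b (m n : ℕ) : ℤ :=
  PowerSeries.coeff (R := ℤ) n
    ((fTrunc 4 n) ^ m * PowerSeries.invOfUnit ((fTrunc 1 n) ^ (2 * m) * (fTrunc 2 n) ^ m) 1)

open Finset Pointwise

section EulerProd

variable {A : Type*} [CommRing A]

def eulerProd (x : A) (N : ℕ) : A := ∏ i ∈ Icc 1 N, (1 - x ^ i)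

theorem eulerProd_mul_prod_Icc (x : A) {M N : ℕ} (h : M ≤ N) :
    eulerProd x M * ∏ i ∈ Icc (M + 1) N, (1 - x ^ i) = eulerProd x N := by
  simp only [eulerProd, ← Ico_add_one_right_eq_Icc]
  exact prod_Ico_consecutive _ (by omega) (by omega)

theorem eulerProd_two_mul (x : A) (N : ℕ) :
    eulerProd x (2 * N) = (∏ j ∈ range N, (1 - x ^ (2 * j + 1))) * eulerProd (x ^ 2) N := by
  induction N with
  | zero => simp [eulerProd]
  | succ N ih =>
    simp only [eulerProd] at ih ⊢
    rw [show 2 * (N + 1) = 2 * N + 1 + 1 by ring, prod_Icc_succ_top (by omega),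
      prod_Icc_succ_top (by omega), ih, prod_range_succ, prod_Icc_succ_top (by omega)]
    ring

end EulerProd

section GaussBinom

variable {A : Type*} [CommRing A] (y : A)

def gaussBinom : ℕ → ℕ → A
  | _, 0 => 1
  | 0, _ + 1 => 0
  | N + 1, l + 1 => gaussBinom N (l + 1) + y ^ (N - l) * gaussBinom N l

@[simp] theorem gaussBinom_zero_right (N : ℕ) : gaussBinom y N 0 = 1 := by
  cases N <;> rfl

theorem gaussBinom_succ_succ (N l : ℕ) :
    gaussBinom y (N + 1) (l + 1) = gaussBinom y N (l + 1) + y ^ (N - l) * gaussBinom y N l :=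
  rfl

theorem gaussBinom_eq_zero_of_lt {N l : ℕ} (h : N < l) : gaussBinom y N l = 0 := by
  induction N generalizing l with
  | zero => obtain ⟨l, rfl⟩ := Nat.exists_eq_succ_of_ne_zero h.ne'; rfl
  | succ N ih =>
    obtain ⟨l, rfl⟩ := Nat.exists_eq_succ_of_ne_zero (by omega : l ≠ 0)
    rw [gaussBinom_succ_succ, ih (by omega), ih (by omega), mul_zero, add_zero]

theorem gaussBinom_succ_succ' (N l : ℕ) :
    gaussBinom y (N + 1) (l + 1) = y ^ (l + 1) * gaussBinom y N (l + 1) + gaussBinom y N l := by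
  induction N generalizing l with
  | zero => cases l <;> simp [gaussBinom_succ_succ, gaussBinom_eq_zero_of_lt]
  | succ N ih =>
    cases l with
    | zero =>
      have e₁ := gaussBinom_succ_succ y N 0
      have e₂ := gaussBinom_succ_succ y (N + 1) 0
      have e₃ := ih 0
      simp only [gaussBinom_zero_right, Nat.sub_zero, mul_one] at e₁ e₂ e₃ ⊢
      linear_combination e₂ + e₃ - y * e₁
    | succ l =>
      rcases lt_trichotomy l N with hl | rfl | hl
      · obtain ⟨d, rfl⟩ := Nat.exists_eq_add_of_lt hl
        have e₁ := gaussBinom_succ_succ y (l + d + 1) l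
        have e₂ := gaussBinom_succ_succ y (l + d + 1) (l + 1)
        have e₃ := gaussBinom_succ_succ y (l + d + 1 + 1) (l + 1)
        rw [show l + d + 1 - l = d + 1 by omega] at e₁
        rw [show l + d + 1 - (l + 1) = d by omega] at e₂
        rw [show l + d + 1 + 1 - (l + 1) = d + 1 by omega] at e₃
        linear_combination e₃ + ih (l + 1) + y ^ (d + 1) * ih l - y ^ (l + 1 + 1) * e₂ - e₁
      · simp [gaussBinom_succ_succ, gaussBinom_eq_zero_of_lt]
      · simp [gaussBinom_eq_zero_of_lt y (by omega : N + 1 < l + 1),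
          gaussBinom_eq_zero_of_lt y (by omega : N + 1 < l + 1 + 1),
          gaussBinom_eq_zero_of_lt y (by omega : N + 1 + 1 < l + 1 + 1)]

theorem gaussBinom_mul_eulerProd (N l : ℕ) :
    gaussBinom y N l * eulerProd y l = ∏ i ∈ Icc (N + 1 - l) N, (1 - y ^ i) := by
  unfold eulerProd
  induction N generalizing l with
  | zero => cases l <;> simp [gaussBinom]
  | succ N ih =>
    cases l with
    | zero => simp
    | succ l =>
      rcases le_or_gt l N with hl | hl
      · obtain ⟨d, rfl⟩ := Nat.exists_eq_add_of_le hl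
        have h₁ := ih (l + 1)
        have h₂ := ih l
        rw [show l + d + 1 - (l + 1) = d by omega,
          ← insert_Icc_add_one_left_eq_Icc (show d ≤ l + d by omega), prod_insert (by simp),
          prod_Icc_succ_top (show 1 ≤ l + 1 by omega)] at h₁
        rw [show l + d + 1 - l = d + 1 by omega] at h₂
        rw [gaussBinom_succ_succ, show l + d + 1 + 1 - (l + 1) = d + 1 by omega,
          prod_Icc_succ_top (by omega), prod_Icc_succ_top (by omega), show l + d - l = d by omega]
        linear_combination h₁ + y ^ d * (1 - y ^ (l + 1)) * h₂
      · rw [gaussBinom_eq_zero_of_lt y (by omega), zero_mul,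
          show N + 1 + 1 - (l + 1) = 0 by omega]
        exact (prod_eq_zero (i := 0) (by simp) (by simp)).symm

end GaussBinom

section JacobiTriple

variable {A : Type*} [CommRing A]

theorem sum_mul_gaussBinom_shift (y : A) (v : ℕ → A) (N : ℕ) :
    ∑ l ∈ range (N + 1), v (l + 1) * gaussBinom y N (l + 1) + v 0 =
      ∑ l ∈ range (N + 1), v l * gaussBinom y N l := by
  rw [sum_range_succ (fun l => v (l + 1) * gaussBinom y N (l + 1)),
    gaussBinom_eq_zero_of_lt y (by omega), mul_zero, add_zero,
    sum_range_succ' (fun l => v l * gaussBinom y N l), gaussBinom_zero_right, mul_one]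

theorem sum_mul_gaussBinom_succ (y : A) (w : ℕ → A) (N : ℕ) :
    ∑ l ∈ range (N + 1 + 1), w l * gaussBinom y (N + 1) l =
      ∑ l ∈ range (N + 1), (w l + w (l + 1) * y ^ (N - l)) * gaussBinom y N l := by
  rw [sum_range_succ']
  simp only [gaussBinom_succ_succ, gaussBinom_zero_right, add_mul, mul_add, sum_add_distrib,
    mul_one, ← sum_mul_gaussBinom_shift y w N]
  simp only [mul_assoc]
  abel

theorem sum_mul_gaussBinom_succ' (y : A) (w : ℕ → A) (N : ℕ) :
    ∑ l ∈ range (N + 1 + 1), w l * gaussBinom y (N + 1) l =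
      ∑ l ∈ range (N + 1), (w l * y ^ l + w (l + 1)) * gaussBinom y N l := by
  have hv := sum_mul_gaussBinom_shift y (fun l => w l * y ^ l) N
  simp only [pow_zero, mul_one] at hv
  rw [sum_range_succ']
  simp only [gaussBinom_succ_succ', gaussBinom_zero_right, add_mul, mul_add, sum_add_distrib,
    mul_one, ← hv]
  simp only [mul_assoc]
  abel

theorem natCast_dist_sq (a b : ℕ) : ((Nat.dist a b : ℕ) : ℤ) ^ 2 = ((a : ℤ) - b) ^ 2 := by
  rcases le_total a b with h | h
  · rw [Nat.dist_eq_sub_of_le h]; push_cast [h]; ring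
  · rw [Nat.dist_eq_sub_of_le_right h]; push_cast [h]; ring

/-- Finite form of the Jacobi triple product identity. -/
theorem prod_mul_prod_eq_sum_gaussBinom (q z : A) (m n : ℕ) :
    (∏ j ∈ range m, (1 + z * q ^ (2 * j + 1))) * ∏ j ∈ range n, (z + q ^ (2 * j + 1)) =
      ∑ l ∈ range (m + n + 1), z ^ l * q ^ (Nat.dist l n ^ 2) * gaussBinom (q ^ 2) (m + n) l := by
  induction m with
  | zero =>
    simp only [prod_range_zero, one_mul, zero_add]
    induction n with
    | zero => simp [Nat.dist_self]
    | succ n ih =>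
      rw [prod_range_succ, ih, sum_mul, sum_mul_gaussBinom_succ']
      refine sum_congr rfl fun l _ => ?_
      have h : Nat.dist l (n + 1) ^ 2 + 2 * l = Nat.dist l n ^ 2 + (2 * n + 1) := by
        zify; rw [natCast_dist_sq, natCast_dist_sq]; push_cast; ring
      have hq : q ^ (Nat.dist l (n + 1) ^ 2) * (q ^ 2) ^ l =
          q ^ (Nat.dist l n ^ 2) * q ^ (2 * n + 1) := by
        rw [← pow_mul, ← pow_add, ← pow_add, h]
      rw [Nat.dist_succ_succ]
      linear_combination (-(z ^ l * gaussBinom (q ^ 2) n l)) * hq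
  | succ m ih =>
    rw [prod_range_succ, mul_right_comm, ih, sum_mul, show m + 1 + n = m + n + 1 by ring,
      sum_mul_gaussBinom_succ]
    refine sum_congr rfl fun l hl => ?_
    have hl : l ≤ m + n := Nat.lt_succ_iff.mp (mem_range.mp hl)
    have h : Nat.dist (l + 1) n ^ 2 + 2 * (m + n - l) = Nat.dist l n ^ 2 + (2 * m + 1) := by
      zify [hl]; rw [natCast_dist_sq, natCast_dist_sq]; push_cast; ring
    have hq : q ^ (Nat.dist (l + 1) n ^ 2) * (q ^ 2) ^ (m + n - l) =
        q ^ (Nat.dist l n ^ 2) * q ^ (2 * m + 1) := by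
      rw [← pow_mul, ← pow_add, ← pow_add, h]
    linear_combination (-(z ^ (l + 1) * gaussBinom (q ^ 2) (m + n) l)) * hq

end JacobiTriple

section Theta

variable {A : Type*} [CommRing A]

/-- `1 + 2 * thetaTail x N` truncates Ramanujan's `φ(-x) = ∑_{s ∈ ℤ} (-1)^s x^{s²}`. -/
def thetaTail (x : A) (N : ℕ) : A := ∑ s ∈ Icc 1 N, (-1) ^ s * x ^ (s ^ 2)

theorem map_thetaTail {B : Type*} [CommRing B] (f : A →+* B) (x : A) (N : ℕ) :
    f (thetaTail x N) = thetaTail (f x) N := by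
  simp [thetaTail]

theorem thetaTail_sq [CharP A 2] (x : A) (N : ℕ) : thetaTail x N ^ 2 = thetaTail (x ^ 2) N := by
  rw [thetaTail, sum_pow_char]
  refine sum_congr rfl fun s _ => ?_
  rw [CharTwo.neg_eq, one_pow, one_mul, one_mul, ← pow_mul, ← pow_mul, mul_comm]

theorem neg_one_pow_dist (l N : ℕ) : (-1 : A) ^ Nat.dist l N = (-1) ^ (l + N) := by
  rw [show l + N = Nat.dist l N + 2 * min l N by unfold Nat.dist; omega, pow_add, pow_mul]
  simp

theorem sum_range_dist (g : ℕ → A) (N : ℕ) :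
    ∑ l ∈ range (2 * N + 1), g (Nat.dist l N) = g 0 + 2 * ∑ s ∈ Icc 1 N, g s := by
  induction N with
  | zero => simp [Nat.dist_self]
  | succ N ih =>
    rw [show 2 * (N + 1) + 1 = 2 * N + 1 + 1 + 1 by ring, sum_range_succ, sum_range_succ']
    simp only [Nat.dist_succ_succ, ih, Nat.dist_zero_left,
      Nat.dist_eq_sub_of_le_right (show N ≤ 2 * N + 1 by omega),
      show 2 * N + 1 - N = N + 1 by omega, sum_Icc_succ_top (show 1 ≤ N + 1 by omega)]
    ring

theorem prod_one_sub_odd_pow_sq (x : A) (N : ℕ) :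
    (∏ j ∈ range N, (1 - x ^ (2 * j + 1))) ^ 2 = ∑ l ∈ range (2 * N + 1),
      (-1) ^ Nat.dist l N * x ^ (Nat.dist l N ^ 2) * gaussBinom (x ^ 2) (2 * N) l := by
  set P := ∏ j ∈ range N, (1 - x ^ (2 * j + 1))
  have hneg : ∏ j ∈ range N, (-1 + x ^ (2 * j + 1)) = (-1) ^ N * P := by
    rw [show (-1 : A) ^ N = ∏ _j ∈ range N, (-1) by simp, ← prod_mul_distrib]
    exact prod_congr rfl fun j _ => by ring
  have h := prod_mul_prod_eq_sum_gaussBinom x (-1) N N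
  simp only [neg_one_mul, ← sub_eq_add_neg, hneg, ← two_mul] at h
  have hsq : ((-1 : A) ^ N) ^ 2 = 1 := by rw [← pow_mul, mul_comm, pow_mul]; simp
  calc P ^ 2 = (-1) ^ N * (P * ((-1) ^ N * P)) := by linear_combination (-P ^ 2) * hsq
    _ = _ := by
      rw [h, mul_sum]
      exact sum_congr rfl fun l _ => by rw [neg_one_pow_dist, pow_add]; ring

end Theta

section Truncation

variable {A : Type*} [CommRing A] {I : Ideal A} {x : A} {D : ℕ}

theorem mk_pow_eq_zero (hx : x ^ (D + 1) ∈ I) {e : ℕ} (he : D < e) :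
    Ideal.Quotient.mk I (x ^ e) = 0 :=
  Ideal.Quotient.eq_zero_iff_mem.2 (I.pow_mem_of_pow_mem hx he)

theorem mk_prod_one_sub_pow_eq_one (hx : x ^ (D + 1) ∈ I) {ι : Type*} (s : Finset ι)
    (e : ι → ℕ) (he : ∀ i ∈ s, D < e i) : Ideal.Quotient.mk I (∏ i ∈ s, (1 - x ^ e i)) = 1 := by
  rw [map_prod]
  exact prod_eq_one fun i hi => by rw [map_sub, map_one, mk_pow_eq_zero hx (he i hi), sub_zero]

theorem mk_eulerProd_of_le (hx : x ^ (D + 1) ∈ I) {N : ℕ} (h : D ≤ N) :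
    Ideal.Quotient.mk I (eulerProd x N) = Ideal.Quotient.mk I (eulerProd x D) := by
  have htail : Ideal.Quotient.mk I (∏ i ∈ Icc (D + 1) N, (1 - x ^ i)) = 1 :=
    mk_prod_one_sub_pow_eq_one hx _ (fun i => i) fun i hi => by simp at hi; omega
  rw [← eulerProd_mul_prod_Icc x h, map_mul, htail, mul_one]

theorem mk_gaussBinom_mul_eulerProd (hx : x ^ (D + 1) ∈ I) {l : ℕ}
    (hl : Nat.dist l D ^ 2 ≤ D) :
    Ideal.Quotient.mk I (gaussBinom (x ^ 2) (2 * D) l * eulerProd (x ^ 2) D) = 1 := by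
  have hfactors : ∀ a b, D + 1 - Nat.dist l D ≤ a →
      Ideal.Quotient.mk I (∏ i ∈ Icc a b, (1 - (x ^ 2) ^ i)) = 1 := by
    intro a b ha
    simp_rw [← pow_mul]
    refine mk_prod_one_sub_pow_eq_one hx _ _ fun i hi => ?_
    have : 2 * Nat.dist l D ≤ D + 1 := by nlinarith [sq_nonneg (Nat.dist l D - 1)]
    simp only [mem_Icc] at hi
    omega
  have hprod := congrArg (Ideal.Quotient.mk I) (gaussBinom_mul_eulerProd (x ^ 2) (2 * D) l)
  rw [hfactors _ _ (by unfold Nat.dist; omega), map_mul] at hprod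
  rcases le_total l D with h | h
  · rw [← eulerProd_mul_prod_Icc _ h, ← mul_assoc, map_mul, map_mul, ← hprod,
      hfactors _ _ (by unfold Nat.dist; omega), mul_one]
  · rw [← eulerProd_mul_prod_Icc _ h, map_mul, hfactors _ _ (by unfold Nat.dist; omega),
      mul_one] at hprod
    rw [map_mul, ← hprod]

/-- Gauss's identity `f(x)² = f(x²) φ(-x)`, truncated. -/
theorem mk_eulerProd_sq (hx : x ^ (D + 1) ∈ I) :
    Ideal.Quotient.mk I (eulerProd x D ^ 2) =
      Ideal.Quotient.mk I (eulerProd (x ^ 2) D * (1 + 2 * thetaTail x D)) := by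
  have hterm : ∀ l ∈ range (2 * D + 1),
      Ideal.Quotient.mk I ((-1) ^ Nat.dist l D * x ^ (Nat.dist l D ^ 2) *
        gaussBinom (x ^ 2) (2 * D) l * eulerProd (x ^ 2) D) =
      Ideal.Quotient.mk I ((-1) ^ Nat.dist l D * x ^ (Nat.dist l D ^ 2)) := by
    intro l _
    rw [mul_assoc, map_mul]
    by_cases h : Nat.dist l D ^ 2 ≤ D
    · rw [mk_gaussBinom_mul_eulerProd hx h, mul_one]
    · rw [map_mul _ _ (x ^ _), mk_pow_eq_zero hx (not_le.mp h)]
      simp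
  have htheta : ∑ l ∈ range (2 * D + 1), (-1 : A) ^ Nat.dist l D * x ^ (Nat.dist l D ^ 2) =
      1 + 2 * thetaTail x D := by
    rw [sum_range_dist (fun s => (-1 : A) ^ s * x ^ (s ^ 2)), thetaTail]
    simp
  calc Ideal.Quotient.mk I (eulerProd x D ^ 2)
      = Ideal.Quotient.mk I (eulerProd x (2 * D) ^ 2) := by
        rw [map_pow, map_pow, mk_eulerProd_of_le hx (N := 2 * D) (by omega)]
    _ = Ideal.Quotient.mk I ((∑ l ∈ range (2 * D + 1), (-1) ^ Nat.dist l D *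
          x ^ (Nat.dist l D ^ 2) * gaussBinom (x ^ 2) (2 * D) l) * eulerProd (x ^ 2) D) *
          Ideal.Quotient.mk I (eulerProd (x ^ 2) D) := by
        rw [eulerProd_two_mul, mul_pow, prod_one_sub_odd_pow_sq, ← map_mul]
        congr 1
        ring
    _ = Ideal.Quotient.mk I (eulerProd (x ^ 2) D * (1 + 2 * thetaTail x D)) := by
        rw [sum_mul, map_sum, sum_congr rfl hterm, ← map_sum, htheta, ← map_mul, mul_comm]

end Truncation

theorem coeff_eq_of_mk_eq {R : Type*} [CommRing R] {D : ℕ} {F G : R⟦X⟧}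
    (h : Ideal.Quotient.mk (Ideal.span {X ^ (D + 1)}) F =
      Ideal.Quotient.mk (Ideal.span {X ^ (D + 1)}) G) : coeff D F = coeff D G := by
  rw [Ideal.Quotient.eq, Ideal.mem_span_singleton, X_pow_dvd_iff] at h
  exact sub_eq_zero.1 (by simpa using h D (by omega))

theorem PowerSeries.coeff_ofNat_mul {R : Type*} [Semiring R] (k n : ℕ) [k.AtLeastTwo]
    (F : R⟦X⟧) : coeff n ((ofNat(k) : R⟦X⟧) * F) = ofNat(k) * coeff n F := by
  rw [← map_ofNat C k, coeff_C_mul]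

section ResidueSupport

variable {R : Type*} [Semiring R]

def SupportedModIn (M : ℕ) (S : Finset (ZMod M)) (F : R⟦X⟧) : Prop :=
  ∀ n, coeff n F ≠ 0 → (n : ZMod M) ∈ S

namespace SupportedModIn

variable {M : ℕ} {S T : Finset (ZMod M)} {F G : R⟦X⟧}

theorem coeff_eq_zero (hF : SupportedModIn M S F) {n : ℕ} (hn : (n : ZMod M) ∉ S) :
    coeff n F = 0 :=
  not_not.1 (mt (hF n) hn)

theorem mul (hF : SupportedModIn M S F) (hG : SupportedModIn M T G) :
    SupportedModIn M (S + T) (F * G) := by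
  intro n hn
  rw [coeff_mul] at hn
  obtain ⟨⟨i, j⟩, hij, hne⟩ := exists_ne_zero_of_sum_ne_zero hn
  rw [HasAntidiagonal.mem_antidiagonal] at hij
  rw [← hij, Nat.cast_add]
  exact add_mem_add (hF i (left_ne_zero_of_mul hne)) (hG j (right_ne_zero_of_mul hne))

theorem map {R' : Type*} [Semiring R'] (f : R →+* R') (hF : SupportedModIn M S F) :
    SupportedModIn M S (PowerSeries.map f F) := fun n hn =>
  hF n fun h => hn (by rw [coeff_map, h, map_zero])

end SupportedModIn

end ResidueSupport

theorem supportedModIn_thetaTail {R : Type*} [CommRing R] (M : ℕ) [NeZero M] (c N : ℕ) :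
    SupportedModIn M (univ.image fun y : ZMod M => (c : ZMod M) * y ^ 2)
      (thetaTail (X ^ c : R⟦X⟧) N) := by
  intro n hn
  rw [thetaTail, map_sum] at hn
  obtain ⟨s, -, hs⟩ := exists_ne_zero_of_sum_ne_zero hn
  rw [← pow_mul, show (-1 : R⟦X⟧) ^ s = C ((-1) ^ s) by simp, coeff_C_mul, coeff_X_pow] at hs
  have hn : n = c * s ^ 2 := by by_contra h; simp [h] at hs
  exact mem_image.2 ⟨s, mem_univ _, by rw [hn]; push_cast; ring⟩

theorem one_add_two_mul_pow_eight {A : Type*} [CommRing A] (h16 : (16 : A) = 0) (a : A) :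
    (1 + 2 * a) ^ 8 = 1 := by
  linear_combination (a + 7 * a ^ 2 + 28 * a ^ 3 + 70 * a ^ 4 + 112 * a ^ 5 + 112 * a ^ 6
    + 64 * a ^ 7 + 16 * a ^ 8) * h16

theorem sixteen_eq_zero_zmod_powerSeries : (16 : (ZMod 16)⟦X⟧) = 0 := by
  rw [← map_ofNat C 16, show (16 : ZMod 16) = 0 from rfl, map_zero]

theorem coeff_pow_eq_zero_of_cast_eq_seven {A B : (ZMod 16)⟦X⟧}
    (hA : SupportedModIn 8 (univ.image fun y : ZMod 8 => y ^ 2) A)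
    (hB : SupportedModIn 8 (univ.image fun y : ZMod 8 => 2 * y ^ 2) B)
    (hsq : PowerSeries.map (ZMod.castHom (by norm_num : 2 ∣ 16) (ZMod 2)) A ^ 2 =
      PowerSeries.map (ZMod.castHom (by norm_num : 2 ∣ 16) (ZMod 2)) B)
    {N : ℕ} (hN : (N : ZMod 8) = 7) (j : ℕ) :
    coeff N (((1 + 2 * A) * (1 + 2 * B)) ^ j) = 0 := by
  have h16 := sixteen_eq_zero_zmod_powerSeries
  have hN0 : N ≠ 0 := by rintro rfl; exact absurd hN (by decide)
  have vanish {R : Type} [CommRing R] {S : Finset (ZMod 8)} {F : R⟦X⟧}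
      (hF : SupportedModIn 8 S F) (h7 : (7 : ZMod 8) ∉ S) : coeff N F = 0 :=
    hF.coeff_eq_zero (hN ▸ h7)
  have cA : coeff N A = 0 := vanish hA (by decide)
  have cB : coeff N B = 0 := vanish hB (by decide)
  have cAB : coeff N (A * B) = 0 := vanish (hA.mul hB) (by decide)
  have cAA : coeff N (A * A) = 0 := vanish (hA.mul hA) (by decide)
  have cBB : coeff N (B * B) = 0 := vanish (hB.mul hB) (by decide)
  -- Only the parity of this coefficient matters; modulo 2, `A² = B` turns `A²B` into `B²`.
  have cAB3 : 8 * coeff N ((A + B) ^ 3) = 0 := by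
    set φ := ZMod.castHom (by norm_num : 2 ∣ 16) (ZMod 2)
    have h8 : ∀ c : ZMod 16, φ c = 0 → 8 * c = 0 := by decide
    refine h8 _ ?_
    rw [← coeff_map, map_pow, map_add]
    have hA' := hA.map φ
    have hB' := hB.map φ
    set A' := PowerSeries.map φ A
    set B' := PowerSeries.map φ B
    rw [show (A' + B') ^ 3 = A' * A' * A' + 3 * (B' * B') + 3 * (A' * (B' * B'))
        + B' * (B' * B') by linear_combination (3 * B') * hsq]
    simp only [map_add, coeff_ofNat_mul, vanish ((hA'.mul hA').mul hA') (by decide),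
      vanish (hB'.mul hB') (by decide), vanish (hA'.mul (hB'.mul hB')) (by decide),
      vanish (hB'.mul (hB'.mul hB')) (by decide), mul_zero, add_zero]
  set S := A + B + 2 * (A * B)
  have key : ∀ a, coeff N ((2 * S) ^ a) = 0
    | 0 => by simp [coeff_one, hN0]
    | 1 => by simp [S, mul_add, coeff_ofNat_mul, cA, cB, cAB]
    | 2 => by
      rw [show (2 * S) ^ 2 = 4 * (A * A) + 4 * (B * B) + 8 * (A * B) by
        linear_combination (A * A * B * B + A * A * B + A * B * B) * h16]
      simp [coeff_ofNat_mul, cAA, cBB, cAB]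
    | 3 => by
      rw [show (2 * S) ^ 3 = 8 * (A + B) ^ 3 by
        linear_combination (3 * (A + B) ^ 2 * A * B + 6 * (A + B) * A ^ 2 * B ^ 2
          + 4 * A ^ 3 * B ^ 3) * h16]
      rw [coeff_ofNat_mul, cAB3]
    | a + 4 => by
      rw [mul_pow, pow_add, show (2 : (ZMod 16)⟦X⟧) ^ 4 = 16 by norm_num, h16]
      simp
  rw [show (1 + 2 * A) * (1 + 2 * B) = 2 * S + 1 by ring, add_pow, map_sum]
  exact sum_eq_zero fun a _ => by
    rw [one_pow, mul_one, ← map_natCast C, coeff_mul_C, key, zero_mul]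

theorem map_fTrunc {R : Type*} [CommRing R] (k N : ℕ) :
    PowerSeries.map (Int.castRingHom R) (fTrunc k N) = eulerProd (X ^ k) N := by
  simp [fTrunc, eulerProd, pow_mul]

theorem constantCoeff_fTrunc {k : ℕ} (hk : k ≠ 0) (N : ℕ) : constantCoeff (fTrunc k N) = 1 := by
  rw [fTrunc, map_prod]
  exact prod_eq_one fun i hi => by
    simp only [mem_Icc] at hi
    simp [hk]
    omega

theorem mk_map_series_eq_theta_pow (m D : ℕ) :
    Ideal.Quotient.mk (Ideal.span {(X : (ZMod 16)⟦X⟧) ^ (D + 1)})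
      (PowerSeries.map (Int.castRingHom (ZMod 16))
        (fTrunc 4 D ^ m * invOfUnit (fTrunc 1 D ^ (2 * m) * fTrunc 2 D ^ m) 1)) =
    Ideal.Quotient.mk (Ideal.span {(X : (ZMod 16)⟦X⟧) ^ (D + 1)})
      (((1 + 2 * thetaTail X D) * (1 + 2 * thetaTail (X ^ 2) D)) ^ (7 * m)) := by
  set π := Ideal.Quotient.mk (Ideal.span {(X : (ZMod 16)⟦X⟧) ^ (D + 1)})
  set φ := PowerSeries.map (Int.castRingHom (ZMod 16))
  set u := fTrunc 1 D ^ (2 * m) * fTrunc 2 D ^ m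
  set T := (1 + 2 * thetaTail (X : (ZMod 16)⟦X⟧) D) * (1 + 2 * thetaTail (X ^ 2) D)
  have hX : (X : (ZMod 16)⟦X⟧) ^ (D + 1) ∈ Ideal.span {X ^ (D + 1)} := Ideal.subset_span rfl
  have hX2 : ((X : (ZMod 16)⟦X⟧) ^ 2) ^ (D + 1) ∈ Ideal.span {X ^ (D + 1)} :=
    Ideal.mem_span_singleton.2 (pow_dvd_pow_of_dvd (dvd_pow_self _ two_ne_zero) _)
  have hf1 : π (φ (fTrunc 1 D)) ^ 2 = π (φ (fTrunc 2 D)) * π (1 + 2 * thetaTail X D) := by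
    rw [← map_pow, ← map_mul, map_fTrunc, map_fTrunc, pow_one, mk_eulerProd_sq hX]
  have hf2 : π (φ (fTrunc 2 D)) ^ 2 =
      π (φ (fTrunc 4 D)) * π (1 + 2 * thetaTail (X ^ 2) D) := by
    rw [← map_pow, ← map_mul, map_fTrunc, map_fTrunc, mk_eulerProd_sq hX2, ← pow_mul]
  have hu : π (φ u) = (π (φ (fTrunc 4 D)) * π T) ^ m := calc
    π (φ u) = (π (φ (fTrunc 1 D)) ^ 2) ^ m * π (φ (fTrunc 2 D)) ^ m := by
      simp only [u, map_mul, map_pow, pow_mul]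
    _ = (π (φ (fTrunc 2 D)) ^ 2) ^ m * π (1 + 2 * thetaTail X D) ^ m := by rw [hf1]; ring
    _ = (π (φ (fTrunc 4 D)) * π T) ^ m := by simp only [hf2, T, map_mul]; ring
  have huinv : π (φ u) * π (φ (invOfUnit u 1)) = 1 := by
    rw [← map_mul, ← map_mul, mul_invOfUnit u 1 (by
      simp [u, constantCoeff_fTrunc one_ne_zero, constantCoeff_fTrunc two_ne_zero]),
      map_one, map_one]
  have hT : π T ^ (8 * m) = 1 := by
    rw [pow_mul, ← map_pow, show T = 1 + 2 * (thetaTail X D + thetaTail (X ^ 2) D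
      + 2 * (thetaTail X D * thetaTail (X ^ 2) D)) by ring,
      one_add_two_mul_pow_eight sixteen_eq_zero_zmod_powerSeries, map_one, one_pow]
  calc π (φ (fTrunc 4 D ^ m * invOfUnit u 1))
      = π (φ u) * π (φ (invOfUnit u 1)) * π T ^ (7 * m) := by
        simp only [hu, map_mul, map_pow]
        linear_combination (-(π (φ (fTrunc 4 D)) ^ m * π (φ (invOfUnit u 1)))) * hT
    _ = π (T ^ (7 * m)) := by rw [huinv, one_mul, map_pow]

theorem b_eight_mul_add_seven_modEq_zero (m n : ℕ) : b m (8 * n + 7) ≡ 0 [ZMOD 16] := by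
  set D := 8 * n + 7
  set φ := ZMod.castHom (by norm_num : 2 ∣ 16) (ZMod 2)
  have hA := supportedModIn_thetaTail (R := ZMod 16) 8 1 D
  have hB := supportedModIn_thetaTail (R := ZMod 16) 8 2 D
  simp only [Nat.cast_one, one_mul, pow_one, Nat.cast_ofNat] at hA hB
  have : CharP (ZMod 2)⟦X⟧ 2 :=
    charP_of_injective_algebraMap (algebraMap (ZMod 2) _).injective 2
  have hsq : PowerSeries.map φ (thetaTail X D) ^ 2 = PowerSeries.map φ (thetaTail (X ^ 2) D) := by
    rw [map_thetaTail, map_thetaTail, map_pow, map_X, thetaTail_sq]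
  have hD : (D : ZMod 8) = 7 := by
    simp [D, show (8 : ZMod 8) = 0 from rfl]
  apply (ZMod.intCast_eq_intCast_iff _ _ 16).1
  rw [Int.cast_zero, b, ← eq_intCast (Int.castRingHom (ZMod 16)), ← coeff_map,
    coeff_eq_of_mk_eq (mk_map_series_eq_theta_pow m D)]
  exact coeff_pow_eq_zero_of_cast_eq_seven hA hB hsq hD _

theorem stmt18 (n k : ℕ) : b (2 * k + 1) (8 * n + 7) ≡ 0 [ZMOD 16] :=
  b_eight_mul_add_seven_modEq_zero _ n
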